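/- For φ ∈ (0, π), the ratio B_c(φ)/B_s(φ) is strictly decreasing; indeed (B_c⁴/B_s⁴)′ = −2 sin φ (3−3cos φ+cos²φ)(2−cos φ)(3+cos φ) / [(1−cos φ)³(7−4cos φ+cos²φ)²] < 0. -/

import Mathlib

open Real Set

noncomputable def α₂ (φ : ℝ) : ℂ :=
  1 + ((Real.cos φ : ℂ) - 1) * Complex.exp (2 * Real.pi * Complex.I / 3)

noncomputable def Bc (φ : ℝ) : ℝ := ‖α₂ φ‖

noncomputable def Bs (φ : ℝ) : ℝ :=
  ((1 - Real.cos φ) ^ 2 * (7 - 4 * Real.cos φ + Real.cos φ ^ 2)) ^ ((1 : ℝ) / 4)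

/-!
With `c = cos φ`, both `Bc φ ^ 4 = (3 - 3c + c²)²` and `Bs φ ^ 4 = (1 - c)² (7 - 4c + c²)` are
polynomials in `c`, so `(Bc / Bs) ^ 4 = quarticRatio (cos φ)`. The derivative
`2 (3 - 3c + c²)(2 - c)(3 + c) / ((1 - c)³ (7 - 4c + c²)²)` of `quarticRatio` is positive on
`(-1, 1)` and `cos' = -sin < 0` on `(0, π)`, so `(Bc / Bs) ^ 4` is strictly decreasing there,
and so is the nonnegative ratio `Bc / Bs`.
-/

lemma α₂_eq (φ : ℝ) :
    α₂ φ = ((3 - cos φ) / 2 : ℝ) + ((cos φ - 1) * √3 / 2 : ℝ) * Complex.I := by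
  have hc : cos (2 * π / 3) = -(1 / 2) := by
    rw [show 2 * π / 3 = π - π / 3 by ring, cos_pi_sub, cos_pi_div_three]
  have hs : sin (2 * π / 3) = √3 / 2 := by
    rw [show 2 * π / 3 = π - π / 3 by ring, sin_pi_sub, sin_pi_div_three]
  have harg : 2 * (π : ℂ) * Complex.I / 3 = ((2 * π / 3 : ℝ) : ℂ) * Complex.I := by
    push_cast; ring
  rw [α₂, harg, Complex.exp_mul_I, ← Complex.ofReal_cos, ← Complex.ofReal_sin, hc, hs]
  push_cast
  ring

lemma Bc_sq (φ : ℝ) : Bc φ ^ 2 = 3 - 3 * cos φ + cos φ ^ 2 := by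
  rw [Bc, Complex.sq_norm, α₂_eq, Complex.normSq_add_mul_I]
  linear_combination ((cos φ - 1) ^ 2 / 4) * Real.sq_sqrt (show (0 : ℝ) ≤ 3 by norm_num)

lemma seven_sub_four_mul_add_sq_pos (c : ℝ) : 0 < 7 - 4 * c + c ^ 2 := by
  nlinarith [sq_nonneg (c - 2)]

lemma Bs_pow_four (φ : ℝ) :
    Bs φ ^ 4 = (1 - cos φ) ^ 2 * (7 - 4 * cos φ + cos φ ^ 2) := by
  have hb := mul_nonneg (sq_nonneg (1 - cos φ)) (seven_sub_four_mul_add_sq_pos (cos φ)).le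
  rw [Bs, ← Real.rpow_natCast, ← Real.rpow_mul hb]
  norm_num

noncomputable def quarticRatio (c : ℝ) : ℝ :=
  (3 - 3 * c + c ^ 2) ^ 2 / ((1 - c) ^ 2 * (7 - 4 * c + c ^ 2))

lemma Bc_pow_four_div_Bs_pow_four :
    (fun φ => Bc φ ^ 4 / Bs φ ^ 4) = quarticRatio ∘ cos := by
  funext φ
  rw [Function.comp_apply, quarticRatio, Bs_pow_four, ← Bc_sq, ← pow_mul]

lemma hasDerivAt_quarticRatio {c : ℝ} (hc : c ≠ 1) :
    HasDerivAt quarticRatio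
      (2 * (3 - 3 * c + c ^ 2) * (2 - c) * (3 + c) /
        ((1 - c) ^ 3 * (7 - 4 * c + c ^ 2) ^ 2)) c := by
  have hnum : HasDerivAt (fun y : ℝ => (3 - 3 * y + y ^ 2) ^ 2)
      (2 * (3 - 3 * c + c ^ 2) * (2 * c - 3)) c :=
    ((((hasDerivAt_id' (x := c)).const_mul 3).const_sub 3).fun_add (hasDerivAt_pow 2 c)).fun_pow 2
      |>.congr_deriv (by norm_num only; ring)
  have hden : HasDerivAt (fun y : ℝ => (1 - y) ^ 2 * (7 - 4 * y + y ^ 2))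
      (-2 * (1 - c) * (7 - 4 * c + c ^ 2) + (1 - c) ^ 2 * (2 * c - 4)) c := by
    have h1 := ((hasDerivAt_id' (x := c)).const_sub 1).fun_pow 2
    have h2 := (((hasDerivAt_id' (x := c)).const_mul 4).const_sub 7).fun_add (hasDerivAt_pow 2 c)
    exact (h1.fun_mul h2).congr_deriv (by norm_num only; ring)
  have h1c : 1 - c ≠ 0 := sub_ne_zero.mpr hc.symm
  have hq := (seven_sub_four_mul_add_sq_pos c).ne'
  refine (hnum.fun_div hden (mul_ne_zero (pow_ne_zero 2 h1c) hq)).congr_deriv ?_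
  field_simp
  ring

lemma hasDerivAt_Bc_pow_four_div_Bs_pow_four {φ : ℝ} (hφ : cos φ ≠ 1) :
    HasDerivAt (fun x => Bc x ^ 4 / Bs x ^ 4)
      (-(2 * sin φ * (3 - 3 * cos φ + cos φ ^ 2) * (2 - cos φ) * (3 + cos φ)) /
        ((1 - cos φ) ^ 3 * (7 - 4 * cos φ + cos φ ^ 2) ^ 2)) φ := by
  rw [Bc_pow_four_div_Bs_pow_four]
  refine ((hasDerivAt_quarticRatio hφ).comp φ (hasDerivAt_cos φ)).congr_deriv ?_
  ring

lemma cos_mem_Ioo_of_mem_Ioo {φ : ℝ} (hφ : φ ∈ Ioo 0 π) : cos φ ∈ Ioo (-1) 1 := by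
  have hs := sin_pos_of_pos_of_lt_pi hφ.1 hφ.2
  constructor <;> nlinarith [sin_sq_add_cos_sq φ, neg_one_le_cos φ, cos_le_one φ]

lemma deriv_quarticRatio_pos {c : ℝ} (hc : c ∈ Ioo (-1) 1) : 0 < deriv quarticRatio c := by
  obtain ⟨h1, h2⟩ := hc
  rw [(hasDerivAt_quarticRatio h2.ne).deriv]
  have hp : 0 < 3 - 3 * c + c ^ 2 := by nlinarith [sq_nonneg (c - 3 / 2)]
  have hq := seven_sub_four_mul_add_sq_pos c
  have h2c : 0 < 2 - c := by linarith
  have h3c : 0 < 3 + c := by linarith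
  have h1c : 0 < 1 - c := by linarith
  positivity

lemma Bc_div_Bs_nonneg (φ : ℝ) : 0 ≤ Bc φ / Bs φ :=
  div_nonneg (norm_nonneg _) (Real.rpow_nonneg
    (mul_nonneg (sq_nonneg _) (seven_sub_four_mul_add_sq_pos _).le) _)

theorem Bc_div_Bs_strictAnti :
    StrictAntiOn (fun φ => Bc φ / Bs φ) (Ioo 0 π) ∧
      ∀ φ ∈ Ioo (0 : ℝ) π,
        deriv (fun x => Bc x ^ 4 / Bs x ^ 4) φ =
          -(2 * Real.sin φ * (3 - 3 * Real.cos φ + Real.cos φ ^ 2) *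
              (2 - Real.cos φ) * (3 + Real.cos φ)) /
            ((1 - Real.cos φ) ^ 3 * (7 - 4 * Real.cos φ + Real.cos φ ^ 2) ^ 2) ∧
        deriv (fun x => Bc x ^ 4 / Bs x ^ 4) φ < 0 := by
  have hderiv : ∀ φ ∈ Ioo (0 : ℝ) π, HasDerivAt (fun x => Bc x ^ 4 / Bs x ^ 4)
      (-(2 * sin φ * (3 - 3 * cos φ + cos φ ^ 2) * (2 - cos φ) * (3 + cos φ)) /
        ((1 - cos φ) ^ 3 * (7 - 4 * cos φ + cos φ ^ 2) ^ 2)) φ := fun φ hφ =>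
    hasDerivAt_Bc_pow_four_div_Bs_pow_four (cos_mem_Ioo_of_mem_Ioo hφ).2.ne
  have hneg : ∀ φ ∈ Ioo (0 : ℝ) π, deriv (fun x => Bc x ^ 4 / Bs x ^ 4) φ < 0 := by
    intro φ hφ
    have hc := cos_mem_Ioo_of_mem_Ioo hφ
    rw [(hderiv φ hφ).deriv]
    calc _ = -(sin φ * deriv quarticRatio (cos φ)) := by
          rw [(hasDerivAt_quarticRatio hc.2.ne).deriv]; ring
      _ < 0 := neg_neg_of_pos <|
          mul_pos (sin_pos_of_pos_of_lt_pi hφ.1 hφ.2) (deriv_quarticRatio_pos hc)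
  have hanti4 : StrictAntiOn (fun φ => Bc φ ^ 4 / Bs φ ^ 4) (Ioo 0 π) :=
    strictAntiOn_of_deriv_neg (convex_Ioo 0 π)
      (fun φ hφ => (hderiv φ hφ).continuousAt.continuousWithinAt)
      (by rwa [interior_Ioo])
  refine ⟨fun x hx y hy hxy => ?_, fun φ hφ => ⟨(hderiv φ hφ).deriv, hneg φ hφ⟩⟩
  have h4 := hanti4 hx hy hxy
  simp only [← div_pow] at h4
  exact lt_of_pow_lt_pow_left₀ 4 (Bc_div_Bs_nonneg x) h4
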